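/- Under the BSΔE Lipschitz setting, the one-step estimate holds: E[|y_{k-1} − ȳ_{k-1}|²] ≤ C · E[ |y_k − ȳ_k|² + |f(k, ȳ'_k, z̄'_k) − f̄(k, ȳ'_k, z̄'_k)|² ], where y_{k-1} = f(k, y'_k, z'_k), ȳ_{k-1} = f̄(k, ȳ'_k, z̄'_k), y'_k = E[y_k | F_{k-2}], z'_k = E[y_k w_{k-1} | F_{k-2}], and C depends only on the Lipschitz constant L. -/

import Mathlib

/-!
Conditional Cauchy–Schwarz together with `E[w² | G] = 1` bounds
`‖E[w y | G] - E[w ȳ | G]‖²` by `E[‖y - ȳ‖² | G]`, and conditional Jensen gives the same bound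
for `‖E[y | G] - E[ȳ | G]‖²`. Passing from `f(y', z')` to `f̄(ȳ', z̄')` through `f(ȳ', z̄')`,
the Lipschitz bound and `(a + b)² ≤ 2a² + 2b²` give, pointwise,
`‖y_{k-1} - ȳ_{k-1}‖² ≤ 8L² E[‖y - ȳ‖² | G] + 2‖f(ȳ', z̄') - f̄(ȳ', z̄')‖²`;
integrating yields the estimate with `C = 8L² + 2`.
-/

open MeasureTheory

abbrev Vec (n : ℕ) := EuclideanSpace ℝ (Fin n)

theorem sq_le_mul_of_forall_rat_quadratic_nonneg {a b c : ℝ}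
    (h : ∀ q : ℚ, 0 ≤ a * (q * q) + 2 * b * q + c) : b ^ 2 ≤ a * c := by
  have hreal : ∀ x : ℝ, 0 ≤ a * (x * x) + 2 * b * x + c := fun x =>
    Rat.denseRange_cast.induction_on x (isClosed_le continuous_const (by fun_prop)) h
  have := discrim_le_zero hreal
  rw [discrim] at this
  linarith

section CondExp

variable {Ω : Type*} {m m0 : MeasurableSpace Ω} {μ : Measure Ω}

theorem ae_sq_condExp_mul_le {w g : Ω → ℝ} (hw : Integrable (fun ω => w ω ^ 2) μ)
    (hg : Integrable (fun ω => g ω ^ 2) μ) (hwg : Integrable (fun ω => w ω * g ω) μ) :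
    ∀ᵐ ω ∂μ, μ[fun ω => w ω * g ω | m] ω ^ 2
      ≤ μ[fun ω => w ω ^ 2 | m] ω * μ[fun ω => g ω ^ 2 | m] ω := by
  -- `E[(q w + g)² | m] ≥ 0` for every rational `q`; countably many, so a.e. simultaneously.
  have hquad : ∀ q : ℚ, ∀ᵐ ω ∂μ, 0 ≤ μ[fun ω => w ω ^ 2 | m] ω * (q * q)
      + 2 * μ[fun ω => w ω * g ω | m] ω * q + μ[fun ω => g ω ^ 2 | m] ω := by
    intro q
    have hexpand : (fun ω => ((q : ℝ) * w ω + g ω) ^ 2)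
        = (q * q : ℝ) • (fun ω => w ω ^ 2) + ((2 * q : ℝ) • (fun ω => w ω * g ω)
          + fun ω => g ω ^ 2) := by
      funext ω; simp only [Pi.add_apply, Pi.smul_apply, smul_eq_mul]; ring
    have hnonneg : 0 ≤ᵐ[μ] μ[fun ω => ((q : ℝ) * w ω + g ω) ^ 2 | m] :=
      condExp_nonneg (.of_forall fun ω => sq_nonneg _)
    rw [hexpand] at hnonneg
    filter_upwards [hnonneg, condExp_add (hw.smul (q * q : ℝ)) ((hwg.smul (2 * q : ℝ)).add hg) m,
      condExp_add (hwg.smul (2 * q : ℝ)) hg m, condExp_smul (q * q : ℝ) (fun ω => w ω ^ 2) m,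
      condExp_smul (2 * q : ℝ) (fun ω => w ω * g ω) m] with ω h h1 h2 h3 h4
    simp only [h1, Pi.add_apply, h2, h3, h4, Pi.smul_apply, smul_eq_mul, Pi.zero_apply] at h
    linarith
  filter_upwards [ae_all_iff.2 hquad] with ω hω
  exact sq_le_mul_of_forall_rat_quadratic_nonneg hω

variable {ι : Type*} [Fintype ι]

theorem EuclideanSpace.condExp_apply {Y : Ω → EuclideanSpace ℝ ι} (hY : Integrable Y μ) (i : ι) :
    (fun ω => μ[Y | m] ω i) =ᵐ[μ] μ[fun ω => Y ω i | m] :=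
  (EuclideanSpace.proj i : EuclideanSpace ℝ ι →L[ℝ] ℝ).comp_condExp_comm hY

theorem ae_norm_condExp_smul_sq_le {w : Ω → ℝ} {Y : Ω → EuclideanSpace ℝ ι}
    (hw : Integrable (fun ω => w ω ^ 2) μ) (hY : MemLp Y 2 μ)
    (hwY : Integrable (fun ω => w ω • Y ω) μ) :
    ∀ᵐ ω ∂μ, ‖μ[fun ω => w ω • Y ω | m] ω‖ ^ 2
      ≤ μ[fun ω => w ω ^ 2 | m] ω * μ[fun ω => ‖Y ω‖ ^ 2 | m] ω := by
  have hYi : ∀ i, MemLp (fun ω => Y ω i) 2 μ := fun i =>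
    (EuclideanSpace.proj i : EuclideanSpace ℝ ι →L[ℝ] ℝ).comp_memLp' hY
  have hsum : μ[fun ω => ‖Y ω‖ ^ 2 | m] =ᵐ[μ] ∑ i, μ[fun ω => Y ω i ^ 2 | m] := by
    simp_rw [EuclideanSpace.real_norm_sq_eq]
    convert condExp_finsetSum (fun i _ => (hYi i).integrable_sq) m using 2
    ext ω; simp
  have hcoord := ae_all_iff.2 fun i => EuclideanSpace.condExp_apply (m := m) hwY i
  have hcs := ae_all_iff.2 fun i => ae_sq_condExp_mul_le (m := m) hw (hYi i).integrable_sq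
    ((EuclideanSpace.proj i : EuclideanSpace ℝ ι →L[ℝ] ℝ).integrable_comp hwY)
  filter_upwards [hsum, hcoord, hcs] with ω hsum hcoord hcs
  rw [EuclideanSpace.real_norm_sq_eq, hsum, Finset.sum_apply, Finset.mul_sum]
  refine Finset.sum_le_sum fun i _ => ?_
  rw [hcoord i]
  exact hcs i

theorem ae_norm_condExp_sub_sq_le {E : Type*} [NormedAddCommGroup E] [NormedSpace ℝ E]
    [CompleteSpace E] {y yb : Ω → E} (hy : Integrable y μ) (hyb : Integrable yb μ)
    (hsq : Integrable (fun ω => ‖y ω - yb ω‖ ^ 2) μ) :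
    ∀ᵐ ω ∂μ, ‖μ[y | m] ω - μ[yb | m] ω‖ ^ 2 ≤ μ[fun ω => ‖y ω - yb ω‖ ^ 2 | m] ω := by
  have hjensen := Integrable.norm_condExp_rpow_le (m := m) (f := y - yb) one_le_two
    (hsq.congr (.of_forall fun ω => (Real.rpow_two _).symm))
  filter_upwards [hjensen, condExp_sub hy hyb m] with ω hj hsub
  simpa only [Real.rpow_two, hsub, Pi.sub_apply] using hj

theorem ae_norm_condExp_smul_sub_sq_le {w : Ω → ℝ} {y yb : Ω → EuclideanSpace ℝ ι}
    (hw : μ[fun ω => w ω ^ 2 | m] =ᵐ[μ] 1) (hwint : Integrable (fun ω => w ω ^ 2) μ)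
    (hy : MemLp y 2 μ) (hyb : MemLp yb 2 μ)
    (hwy : Integrable (fun ω => w ω • y ω) μ) (hwyb : Integrable (fun ω => w ω • yb ω) μ) :
    ∀ᵐ ω ∂μ, ‖μ[fun ω => w ω • y ω | m] ω - μ[fun ω => w ω • yb ω | m] ω‖ ^ 2
      ≤ μ[fun ω => ‖y ω - yb ω‖ ^ 2 | m] ω := by
  have hwdiff : (fun ω => w ω • (y ω - yb ω)) = (fun ω => w ω • y ω) - fun ω => w ω • yb ω := by
    funext ω; simp [smul_sub]
  have hcs := ae_norm_condExp_smul_sq_le (m := m) hwint (hy.sub hyb)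
    (hwdiff ▸ hwy.sub hwyb)
  filter_upwards [hcs, hw, condExp_sub hwy hwyb m] with ω hcs hw hsub
  simpa only [hwdiff, hsub, Pi.sub_apply, hw, Pi.one_apply, one_mul] using hcs

theorem integral_le_of_ae_le_condExp (hm : m ≤ m0) [SigmaFinite (μ.trim hm)] {Φ g h : Ω → ℝ}
    {a b : ℝ} (hΦ : Integrable Φ μ) (hh : Integrable h μ)
    (hle : Φ ≤ᵐ[μ] fun ω => a * μ[g | m] ω + b * h ω) :
    ∫ ω, Φ ω ∂μ ≤ a * ∫ ω, g ω ∂μ + b * ∫ ω, h ω ∂μ := by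
  calc ∫ ω, Φ ω ∂μ ≤ ∫ ω, (a * μ[g | m] ω + b * h ω) ∂μ :=
        integral_mono_ae hΦ ((integrable_condExp.const_mul a).add (hh.const_mul b)) hle
    _ = a * ∫ ω, g ω ∂μ + b * ∫ ω, h ω ∂μ := by
      rw [integral_add (integrable_condExp.const_mul a) (hh.const_mul b), integral_const_mul,
        integral_const_mul, integral_condExp hm]

end CondExp

theorem norm_sub_sq_le_of_norm_sub_le {E : Type*} [SeminormedAddCommGroup E] {a b c : E}
    {L s t : ℝ} (h : ‖a - b‖ ≤ L * (s + t)) :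
    ‖a - c‖ ^ 2 ≤ 4 * L ^ 2 * (s ^ 2 + t ^ 2) + 2 * ‖b - c‖ ^ 2 := by
  have htri := pow_le_pow_left₀ (norm_nonneg _) (norm_sub_le_norm_sub_add_norm_sub a b c) 2
  have hlip := pow_le_pow_left₀ (norm_nonneg _) h 2
  nlinarith [sq_nonneg (‖a - b‖ - ‖b - c‖), sq_nonneg (s - t)]

theorem stmt7_general (n : ℕ) (L : ℝ) :
    ∃ C : ℝ, 0 < C ∧
      ∀ (Ω : Type) [m0 : MeasurableSpace Ω] (μ : Measure Ω) [IsProbabilityMeasure μ]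
        (mG : MeasurableSpace Ω), mG ≤ m0 →
      ∀ (w : Ω → ℝ),
        μ[w | mG] =ᵐ[μ] 0 →
        μ[fun ω => w ω ^ 2 | mG] =ᵐ[μ] 1 →
      ∀ (yk ybk : Ω → Vec n), MemLp yk 2 μ → MemLp ybk 2 μ →
        Integrable (fun ω => w ω • yk ω) μ → Integrable (fun ω => w ω • ybk ω) μ →
      ∀ (f fb : Ω → Vec n → Vec n → Vec n),
        (∀ ω y' z' yb' zb',
          ‖f ω y' z' - f ω yb' zb'‖ ≤ L * (‖y' - yb'‖ + ‖z' - zb'‖)) →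
        MemLp (fun ω => f ω ((μ[yk | mG]) ω)
          ((μ[fun ω' => w ω' • yk ω' | mG]) ω)) 2 μ →
        MemLp (fun ω => f ω ((μ[ybk | mG]) ω)
          ((μ[fun ω' => w ω' • ybk ω' | mG]) ω)) 2 μ →
        MemLp (fun ω => fb ω ((μ[ybk | mG]) ω)
          ((μ[fun ω' => w ω' • ybk ω' | mG]) ω)) 2 μ →
        ∫ ω, ‖f ω ((μ[yk | mG]) ω) ((μ[fun ω' => w ω' • yk ω' | mG]) ω)
              - fb ω ((μ[ybk | mG]) ω) ((μ[fun ω' => w ω' • ybk ω' | mG]) ω)‖ ^ 2 ∂μ ≤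
          C * ∫ ω, (‖yk ω - ybk ω‖ ^ 2 +
            ‖f ω ((μ[ybk | mG]) ω) ((μ[fun ω' => w ω' • ybk ω' | mG]) ω)
              - fb ω ((μ[ybk | mG]) ω) ((μ[fun ω' => w ω' • ybk ω' | mG]) ω)‖ ^ 2) ∂μ := by
  refine ⟨8 * L ^ 2 + 2, by positivity, ?_⟩
  intro Ω m0 μ _ mG hmG w _ hw yk ybk hyk hybk hwyk hwybk f fb hLip hA hD hB
  set p := μ[yk | mG]
  set pb := μ[ybk | mG]
  set q := μ[fun ω' => w ω' • yk ω' | mG]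
  set qb := μ[fun ω' => w ω' • ybk ω' | mG]
  have hwint : Integrable (fun ω => w ω ^ 2) μ := by
    by_contra h
    rw [condExp_of_not_integrable h] at hw
    simpa using hw.exists
  have hY : Integrable (fun ω => ‖yk ω - ybk ω‖ ^ 2) μ :=
    (hyk.sub hybk).integrable_norm_pow two_ne_zero
  have hd : Integrable (fun ω => ‖f ω (pb ω) (qb ω) - fb ω (pb ω) (qb ω)‖ ^ 2) μ :=
    (hD.sub hB).integrable_norm_pow two_ne_zero
  have hp := ae_norm_condExp_sub_sq_le (m := mG) (hyk.integrable one_le_two)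
    (hybk.integrable one_le_two) hY
  have hq := ae_norm_condExp_smul_sub_sq_le hw hwint hyk hybk hwyk hwybk
  calc _ ≤ 8 * L ^ 2 * ∫ ω, ‖yk ω - ybk ω‖ ^ 2 ∂μ
        + 2 * ∫ ω, ‖f ω (pb ω) (qb ω) - fb ω (pb ω) (qb ω)‖ ^ 2 ∂μ := by
        refine integral_le_of_ae_le_condExp hmG ((hA.sub hB).integrable_norm_pow two_ne_zero) hd ?_
        filter_upwards [hp, hq] with ω hp hq
        have := norm_sub_sq_le_of_norm_sub_le (c := fb ω (pb ω) (qb ω))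
          (hLip ω (p ω) (q ω) (pb ω) (qb ω))
        nlinarith [mul_le_mul_of_nonneg_left (add_le_add hp hq) (sq_nonneg L)]
    _ ≤ _ := by
      rw [integral_add hY hd]
      have hY0 : 0 ≤ ∫ ω, ‖yk ω - ybk ω‖ ^ 2 ∂μ := integral_nonneg fun ω => sq_nonneg _
      have hd0 : 0 ≤ ∫ ω, ‖f ω (pb ω) (qb ω) - fb ω (pb ω) (qb ω)‖ ^ 2 ∂μ :=
        integral_nonneg fun ω => sq_nonneg _
      nlinarith [sq_nonneg L]

/-- one-step BSΔE estimate.  With `y_{k-1} = f(k, y'_k, z'_k)`,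
`ȳ_{k-1} = f̄(k, ȳ'_k, z̄'_k)`, `y'_k = E[y_k | F_{k-2}]`, `z'_k = E[y_k w_{k-1} | F_{k-2}]`,
one has `E[‖y_{k-1} − ȳ_{k-1}‖²] ≤ C E[‖y_k − ȳ_k‖² + ‖f(k,ȳ'_k,z̄'_k) − f̄(k,ȳ'_k,z̄'_k)‖²]`,
with `C` depending only on the Lipschitz constant `L`.  Here `mG` plays the role of
`F_{k-2}` and `w` of `w_{k-1}`. -/
theorem stmt7 (n : ℕ) (L : ℝ) (hL : 0 < L) :
    ∃ C : ℝ, 0 < C ∧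
      ∀ (Ω : Type) [m0 : MeasurableSpace Ω] (μ : Measure Ω) [IsProbabilityMeasure μ]
        (mG : MeasurableSpace Ω), mG ≤ m0 →
      ∀ (w : Ω → ℝ),
        μ[w | mG] =ᵐ[μ] 0 →
        μ[fun ω => w ω ^ 2 | mG] =ᵐ[μ] 1 →
      ∀ (yk ybk : Ω → Vec n), MemLp yk 2 μ → MemLp ybk 2 μ →
        Integrable (fun ω => w ω • yk ω) μ → Integrable (fun ω => w ω • ybk ω) μ →
      ∀ (f fb : Ω → Vec n → Vec n → Vec n),
        (∀ ω y' z' yb' zb',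
          ‖f ω y' z' - f ω yb' zb'‖ ≤ L * (‖y' - yb'‖ + ‖z' - zb'‖)) →
        MemLp (fun ω => f ω ((μ[yk | mG]) ω)
          ((μ[fun ω' => w ω' • yk ω' | mG]) ω)) 2 μ →
        MemLp (fun ω => f ω ((μ[ybk | mG]) ω)
          ((μ[fun ω' => w ω' • ybk ω' | mG]) ω)) 2 μ →
        MemLp (fun ω => fb ω ((μ[ybk | mG]) ω)
          ((μ[fun ω' => w ω' • ybk ω' | mG]) ω)) 2 μ →
        ∫ ω, ‖f ω ((μ[yk | mG]) ω) ((μ[fun ω' => w ω' • yk ω' | mG]) ω)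
              - fb ω ((μ[ybk | mG]) ω) ((μ[fun ω' => w ω' • ybk ω' | mG]) ω)‖ ^ 2 ∂μ ≤
          C * ∫ ω, (‖yk ω - ybk ω‖ ^ 2 +
            ‖f ω ((μ[ybk | mG]) ω) ((μ[fun ω' => w ω' • ybk ω' | mG]) ω)
              - fb ω ((μ[ybk | mG]) ω) ((μ[fun ω' => w ω' • ybk ω' | mG]) ω)‖ ^ 2) ∂μ :=
  stmt7_general n L
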